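/- arXiv:2407.15287 — 8 statements merged into one kernel-verified Lean document; each statement's English description precedes it below -/
import Mathlib

section
/- Let M be a T1 topological space in which every point is an accumulation point (i.e. M has no isolated points), and let k be a natural number. Then the ordered configuration space OConf_k(M) = {f : Fin k → M | Function.Injective f} is dense in the product space (Fin k → M). -/
open scoped Topology

lemma exists_inj_choice {M : Type*} : ∀ (k : ℕ) (V : Fin k → Set M),
    (∀ i, (V i).Infinite) → ∃ g : Fin k → M, Function.Injective g ∧ ∀ i, g i ∈ V i := by
  intro k
  induction k with
  | zero => exact fun V _ => ⟨Fin.elim0, fun i => i.elim0, fun i => i.elim0⟩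
  | succ n ih =>
    intro V hV
    obtain ⟨g, hginj, hgmem⟩ := ih (V ∘ Fin.castSucc) (fun i => hV _)
    have : ((V (Fin.last n)) \ Set.range g).Infinite :=
      (hV (Fin.last n)).diff (Set.finite_range g)
    obtain ⟨x, hx⟩ := this.nonempty
    refine ⟨Fin.snoc g x, ?_, ?_⟩
    · intro i j hij
      induction i using Fin.lastCases with
      | last =>
        induction j using Fin.lastCases with
        | last => rfl
        | cast j =>
          simp [Fin.snoc_last, Fin.snoc_castSucc] at hij
          exact absurd ⟨j, hij.symm⟩ hx.2
      | cast i =>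
        induction j using Fin.lastCases with
        | last =>
          simp [Fin.snoc_last, Fin.snoc_castSucc] at hij
          exact absurd ⟨i, hij⟩ hx.2
        | cast j =>
          simp only [Fin.snoc_castSucc] at hij
          exact congrArg Fin.castSucc (hginj hij)
    · intro i
      induction i using Fin.lastCases with
      | last => simpa using hx.1
      | cast i => simpa using hgmem i

/-- For a T1 space `M` with no isolated points (every point is an accumulation point),
the ordered configuration space `OConf_k(M) = {f : Fin k → M | Function.Injective f}`
is dense in the product space `Fin k → M`. -/
theorem oconf_dense (M : Type*) [TopologicalSpace M] [T1Space M]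
    (hM : ∀ x : M, (𝓝[≠] x).NeBot) (k : ℕ) :
    Dense {f : Fin k → M | Function.Injective f} := by
  rw [dense_iff_inter_open]
  rintro U hU ⟨f, hf⟩
  obtain ⟨I, u, hu, hsub⟩ := isOpen_pi_iff.1 hU f hf
  set V : Fin k → Set M := fun i => if i ∈ I then u i else Set.univ with hV
  have hmem : ∀ i, V i ∈ 𝓝 (f i) := by
    intro i
    by_cases h : i ∈ I
    · simpa [hV, h] using (hu i h).1.mem_nhds (hu i h).2
    · simp [hV, h]
  have hinf : ∀ i, (V i).Infinite := fun i =>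
    haveI := hM (f i)
    infinite_of_mem_nhds (f i) (hmem i)
  obtain ⟨g, hginj, hgmem⟩ := exists_inj_choice k V hinf
  refine ⟨g, hsub ?_, hginj⟩
  intro i hi
  have := hgmem i
  simp only [hV] at this
  rwa [if_pos (Finset.mem_coe.1 hi)] at this
end

section
/- Let M be a Hausdorff topological space and k a natural number. Let OConf_k(M) = {f : Fin k → M | Function.Injective f} with the subspace topology, acted on by S_k = Equiv.Perm (Fin k) via σ • f = f ∘ σ⁻¹, and let UConf_k(M) be the quotient topological space by this action with quotient map q_k. Then q_k : OConf_k(M) → UConf_k(M) is a covering map (IsCoveringMap). -/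
/-!
Separating the `k` points of a configuration by pairwise disjoint open sets of the Hausdorff
space `M` gives a neighbourhood of it in `OConf_k(M)` that meets none of its translates under
a nontrivial permutation. The quotient by such an action of a (discrete) group is a covering map.
-/

/-- The ordered configuration space of `k` points of `M`: injective tuples,
with the subspace topology of the product space `Fin k → M`. -/
abbrev OConf (M : Type*) (k : ℕ) : Type _ := {f : Fin k → M // Function.Injective f}

/-- The symmetric group `S_k` acts on ordered configurations by precomposition,
`σ • f = f ∘ σ⁻¹`. -/
instance OConf.instSMul (M : Type*) (k : ℕ) : SMul (Equiv.Perm (Fin k)) (OConf M k) :=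
  ⟨fun σ f => ⟨f.1 ∘ ⇑σ⁻¹, f.2.comp (Equiv.injective _)⟩⟩

instance OConf.instMulAction (M : Type*) (k : ℕ) :
    MulAction (Equiv.Perm (Fin k)) (OConf M k) where
  one_smul f := Subtype.ext rfl
  mul_smul σ τ f := Subtype.ext rfl

/-- The unordered configuration space of `k` points of `M`: the quotient of the ordered
configuration space by the action of the symmetric group, with the quotient topology. -/
abbrev UConf (M : Type*) (k : ℕ) : Type _ :=
  Quotient (MulAction.orbitRel (Equiv.Perm (Fin k)) (OConf M k))

open Topology Function

theorem Function.Injective.exists_nhds_apply_eq_apply_imp_eq {ι M : Type*} [Finite ι]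
    [TopologicalSpace M] [T2Space M] {f : ι → M} (hf : Injective f) :
    ∃ V ∈ 𝓝 f, ∀ g ∈ V, ∀ h ∈ V, ∀ i j, g i = h j → i = j := by
  obtain ⟨W, hW, hdisj⟩ := (Set.finite_range f).t2_separation
  refine ⟨Set.univ.pi fun i => W (f i),
    set_pi_mem_nhds Set.finite_univ fun i _ => (hW (f i)).2.mem_nhds (hW (f i)).1,
    fun g hg h hh i j hij => hf ?_⟩
  by_contra hne
  exact Set.disjoint_left.1 (hdisj (Set.mem_range_self i) (Set.mem_range_self j) hne)
    (hg i trivial) (hij ▸ hh j trivial)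

instance OConf.instContinuousConstSMul (M : Type*) [TopologicalSpace M] (k : ℕ) :
    ContinuousConstSMul (Equiv.Perm (Fin k)) (OConf M k) where
  continuous_const_smul _ :=
    ((Pi.continuous_precomp _).comp continuous_subtype_val).subtype_mk _

theorem OConf.exists_nhds_smul_image_inter_nonempty_imp_eq_one {M : Type*} [TopologicalSpace M]
    [T2Space M] {k : ℕ} (f : OConf M k) :
    ∃ U ∈ 𝓝 f, ∀ σ : Equiv.Perm (Fin k), ((σ • ·) '' U ∩ U).Nonempty → σ = 1 := by
  obtain ⟨V, hV, hsep⟩ := f.2.exists_nhds_apply_eq_apply_imp_eq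
  refine ⟨Subtype.val ⁻¹' V, continuous_subtype_val.continuousAt.preimage_mem_nhds hV, ?_⟩
  rintro σ ⟨_, ⟨g, hg, rfl⟩, hσg⟩
  exact inv_eq_one.1 (Equiv.ext fun i => hsep g.1 hg _ hσg _ _ rfl)

theorem OConf.isQuotientCoveringMap (M : Type*) [TopologicalSpace M] [T2Space M] (k : ℕ) :
    IsQuotientCoveringMap (Quotient.mk (MulAction.orbitRel (Equiv.Perm (Fin k)) (OConf M k)))
      (Equiv.Perm (Fin k)) where
  toIsQuotientMap := isQuotientMap_quotient_mk'
  apply_eq_iff_mem_orbit := Quotient.eq''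
  disjoint := OConf.exists_nhds_smul_image_inter_nonempty_imp_eq_one

/-- For a Hausdorff space `M`, the quotient map
`q_k : OConf_k(M) → UConf_k(M)` is a covering map. -/
theorem uconf_quotient_isCoveringMap (M : Type*) [TopologicalSpace M] [T2Space M] (k : ℕ) :
    IsCoveringMap
      (Quotient.mk (MulAction.orbitRel (Equiv.Perm (Fin k)) (OConf M k)) :
        OConf M k → UConf M k) :=
  (OConf.isQuotientCoveringMap M k).isCoveringMap
end

section
/- Let M be a nonempty compact Hausdorff topological space in which every point is an accumulation point, and let k ≥ 2. Then the ordered configuration space OConf_k(M) = {f : Fin k → M | Function.Injective f} is not compact (as a subset of the product space Fin k → M). -/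
open scoped Topology

/-- For a nonempty compact Hausdorff space `M` in which every point is an accumulation
point, and `k ≥ 2`, the ordered configuration space
`OConf_k(M) = {f : Fin k → M | Function.Injective f}` is not compact. -/
theorem oconf_not_compact (M : Type*) [TopologicalSpace M] [Nonempty M] [CompactSpace M]
    [T2Space M] (hM : ∀ x : M, (𝓝[≠] x).NeBot) (k : ℕ) (hk : 2 ≤ k) :
    ¬ IsCompact {f : Fin k → M | Function.Injective f} := by
  intro hcomp
  have hclosed : IsClosed {f : Fin k → M | Function.Injective f} := hcomp.isClosed
  obtain ⟨x⟩ := ‹Nonempty M›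
  have hx := hM x
  -- the constant function
  set f : Fin k → M := fun _ => x with hf
  have hnotmem : f ∉ {f : Fin k → M | Function.Injective f} := by
    intro hinj
    have h01 : (⟨0, by omega⟩ : Fin k) = ⟨1, by omega⟩ := hinj rfl
    simp [Fin.ext_iff] at h01
  -- but f is in the closure
  have hmem : f ∈ closure {f : Fin k → M | Function.Injective f} := by
    rw [mem_closure_iff_nhds]
    intro t ht
    rw [nhds_pi, Filter.mem_pi] at ht
    obtain ⟨I, -, U, hU, hsub⟩ := ht
    set V : Set M := ⋂ i, U i with hV
    have hVnhds : V ∈ 𝓝 x := by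
      refine Filter.iInter_mem.2 fun i => hU i
    have hVinf : V.Infinite := infinite_of_mem_nhds x hVnhds
    haveI : Infinite V := hVinf.to_subtype
    let e : Fin k ↪ V := (Fin.valEmbedding.trans (Infinite.natEmbedding V))
    refine ⟨fun i => (e i : M), hsub ?_, ?_⟩
    · intro i _
      have : (e i : M) ∈ V := (e i).2
      exact Set.mem_iInter.1 this i
    · intro a b hab
      exact e.injective (Subtype.ext hab)
  rw [hclosed.closure_eq] at hmem
  exact hnotmem hmem
end

section
/- Let K be a field, k a natural number, and V : Fin k → Type a family of K-vector spaces. For a finite subset A : Finset (Fin k), set T_A(V) := ⨁_{e : Fin A.card ≃ A} ⨂_{j : Fin A.card} V(e j), the direct sum over all orderings e of A of the tensor products of the V's along that ordering, and let T(V) := ⨁_{σ : Equiv.Perm (Fin k)} ⨂_{i : Fin k} V(σ i). Then there is a K-linear equivalence ⨁_{A : Finset (Fin k)} (T_A(V) ⊗[K] T_{Aᶜ}(V)) ≃ (Fin (k+1) → T(V)); that is, the direct sum over all subsets A of Fin k of T_A(V) ⊗ T_{Aᶜ}(V) is isomorphic to the direct sum of (k+1) copies of T(V). -/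
/-
Distributing `⊗` over `⊕`, the summand indexed by `A` becomes a sum of tensor products
`(⨂ V (e j)) ⊗ (⨂ V (f j))` over orderings `e` of `A` and `f` of `Aᶜ`. Listing `A` along `e` and
then `Aᶜ` along `f` gives a permutation `σ` of `Fin k` with
`(⨂ V (e j)) ⊗ (⨂ V (f j)) ≅ ⨂ V (σ i)`. The map `(A, e, f) ↦ (#A, σ)` is injective, because `A`
is the image under `σ` of the first `#A` positions, and both sides have
`∑_A #A! (k - #A)! = (k + 1) k!` elements, so it reindexes the sum over `(A, e, f)` by
`Fin (k + 1) × Perm (Fin k)`.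
-/

open scoped TensorProduct DirectSum
open Finset
open scoped Nat

namespace DirectSum

variable (R : Type*) [Semiring R]

def lequivCongr {ι κ : Type*} {M : ι → Type*} {N : κ → Type*}
    [∀ i, AddCommMonoid (M i)] [∀ i, Module R (M i)]
    [∀ j, AddCommMonoid (N j)] [∀ j, Module R (N j)]
    (e : ι ≃ κ) (f : ∀ i, M i ≃ₗ[R] N (e i)) :
    (⨁ i, M i) ≃ₗ[R] ⨁ j, N j :=
  DFinsupp.mapRange.linearEquiv f ≪≫ₗ (lequivCongrLeft R e.symm).symm

def prodLequivPi (ι : Type*) [Fintype ι] [DecidableEq ι] {κ : Type*} (M : κ → Type*)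
    [∀ j, AddCommMonoid (M j)] [∀ j, Module R (M j)] :
    (⨁ p : ι × κ, M p.2) ≃ₗ[R] (ι → ⨁ j, M j) :=
  lequivCongrLeft R (Equiv.sigmaEquivProd ι κ).symm ≪≫ₗ
    sigmaLcurryEquiv R (δ := fun _ j => M j) ≪≫ₗ
    linearEquivFunOnFintype R ι (fun _ => ⨁ j, M j)

end DirectSum

namespace CauchyTensor

section Concatenation

variable {k : ℕ} (A : Finset (Fin k))

def positionEquiv : Fin #A ⊕ Fin #Aᶜ ≃ Fin k :=
  finSumFinEquiv.trans (finCongr ((card_add_card_compl A).trans (Fintype.card_fin k)))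

def memberEquiv : A ⊕ (Aᶜ : Finset (Fin k)) ≃ Fin k :=
  (Equiv.sumCongr (Equiv.refl _) (Equiv.subtypeEquivRight fun _ => mem_compl)).trans
    (Equiv.sumCompl (· ∈ A))

variable {A} (e : Fin #A ≃ A) (f : Fin #Aᶜ ≃ (Aᶜ : Finset (Fin k)))

def concatPerm : Equiv.Perm (Fin k) :=
  (positionEquiv A).symm.trans ((e.sumCongr f).trans (memberEquiv A))

@[simp]
lemma concatPerm_positionEquiv_inl (j : Fin #A) :
    concatPerm e f (positionEquiv A (.inl j)) = e j := by
  simp [concatPerm, memberEquiv]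

@[simp]
lemma concatPerm_positionEquiv_inr (j : Fin #Aᶜ) :
    concatPerm e f (positionEquiv A (.inr j)) = f j := by
  simp [concatPerm, memberEquiv]

lemma mem_iff_concatPerm_symm_lt (x : Fin k) :
    x ∈ A ↔ ((concatPerm e f).symm x : ℕ) < #A := by
  by_cases hx : x ∈ A
  · simp [concatPerm, memberEquiv, positionEquiv, hx, Equiv.sumCompl_symm_apply_of_pos hx]
  · simp [concatPerm, memberEquiv, positionEquiv, hx, Equiv.sumCompl_symm_apply_of_neg hx]

end Concatenation

section Counting

variable (k : ℕ)

abbrev SplitOrdering : Type :=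
  Σ A : Finset (Fin k), (Fin #A ≃ A) × (Fin #Aᶜ ≃ (Aᶜ : Finset (Fin k)))

def SplitOrdering.toCardPerm (q : SplitOrdering k) : Fin (k + 1) × Equiv.Perm (Fin k) :=
  (⟨#q.1, Nat.lt_succ_of_le (card_le_univ q.1 |>.trans_eq (Fintype.card_fin k))⟩,
    concatPerm q.2.1 q.2.2)

lemma SplitOrdering.toCardPerm_injective :
    Function.Injective (SplitOrdering.toCardPerm k) := by
  rintro ⟨A, e, f⟩ ⟨B, e', f'⟩ h
  simp only [toCardPerm, Prod.mk.injEq, Fin.mk.injEq] at h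
  obtain ⟨hcard, hσ⟩ := h
  obtain rfl : A = B := by
    ext x
    rw [mem_iff_concatPerm_symm_lt e f, mem_iff_concatPerm_symm_lt e' f', hσ, hcard]
  have he : e = e' := Equiv.ext fun j => Subtype.ext <| by
    rw [← concatPerm_positionEquiv_inl e f, ← concatPerm_positionEquiv_inl e' f', hσ]
  have hf : f = f' := Equiv.ext fun j => Subtype.ext <| by
    rw [← concatPerm_positionEquiv_inr e f, ← concatPerm_positionEquiv_inr e' f', hσ]
  rw [he, hf]

lemma card_splitOrdering : Fintype.card (SplitOrdering k) = (k + 1) * k ! := by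
  have hsummand (A : Finset (Fin k)) :
      Fintype.card ((Fin #A ≃ A) × (Fin #Aᶜ ≃ (Aᶜ : Finset (Fin k)))) = (#A)! * (k - #A)! := by
    rw [Fintype.card_prod,
      Fintype.card_equiv (Fintype.equivFinOfCardEq (Fintype.card_coe A)).symm,
      Fintype.card_equiv (Fintype.equivFinOfCardEq (Fintype.card_coe Aᶜ)).symm]
    simp [card_compl]
  calc Fintype.card (SplitOrdering k)
      = ∑ A : Finset (Fin k), (#A)! * (k - #A)! := by
        simp only [Fintype.card_sigma, hsummand]
    _ = ∑ m ∈ range (k + 1), k.choose m * (m ! * (k - m)!) := by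
        rw [← powerset_univ, sum_powerset_apply_card fun m => m ! * (k - m)!]
        simp
    _ = (k + 1) * k ! := by
        rw [sum_congr rfl fun m hm => by
          rw [← mul_assoc, Nat.choose_mul_factorial_mul_factorial
            (Nat.lt_succ_iff.mp (mem_range.mp hm))]]
        simp

noncomputable def splitOrderingEquiv : SplitOrdering k ≃ Fin (k + 1) × Equiv.Perm (Fin k) :=
  Equiv.ofBijective _ <| (Fintype.bijective_iff_injective_and_card _).mpr
    ⟨SplitOrdering.toCardPerm_injective k, by
      rw [card_splitOrdering, Fintype.card_prod, Fintype.card_fin, Fintype.card_perm,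
        Fintype.card_fin]⟩

end Counting

variable (R : Type*) [CommSemiring R] {k : ℕ}
  (V : Fin k → Type*) [∀ i, AddCommMonoid (V i)] [∀ i, Module R (V i)]

noncomputable def concatTensorEquiv {A : Finset (Fin k)} (e : Fin #A ≃ A)
    (f : Fin #Aᶜ ≃ (Aᶜ : Finset (Fin k))) :
    (⨂[R] j, V (e j)) ⊗[R] (⨂[R] j, V (f j)) ≃ₗ[R] ⨂[R] i, V (concatPerm e f i) :=
  PiTensorProduct.tmulEquivDep R (fun s => V (memberEquiv A (e.sumCongr f s))) ≪≫ₗ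
    PiTensorProduct.reindex R _ (positionEquiv A)

end CauchyTensor

/-- Fibrewise form of the closure of the Cauchy tensor algebra bundle under
concatenation: for a family `V : Fin k → Type` of `K`-vector spaces, with
`T_A(V) := ⨁_{e : Fin A.card ≃ A} ⨂_{j} V (e j)` and
`T(V) := ⨁_{σ : Perm (Fin k)} ⨂_{i} V (σ i)`, we have
`⨁_{A ⊆ Fin k} T_A(V) ⊗ T_{Aᶜ}(V) ≃ (k+1)` copies of `T(V)`. -/
theorem cauchy_tensor_concatenation_fiber (K : Type*) [Field K] (k : ℕ)
    (V : Fin k → Type*) [∀ i, AddCommGroup (V i)] [∀ i, Module K (V i)] :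
    Nonempty
      ((⨁ A : Finset (Fin k),
          ((⨁ e : Fin A.card ≃ {x // x ∈ A}, ⨂[K] j : Fin A.card, V (e j).1) ⊗[K]
            (⨁ e : Fin Aᶜ.card ≃ {x // x ∈ Aᶜ}, ⨂[K] j : Fin Aᶜ.card, V (e j).1)))
        ≃ₗ[K]
        (Fin (k + 1) → ⨁ σ : Equiv.Perm (Fin k), ⨂[K] i : Fin k, V (σ i))) :=
  ⟨DFinsupp.mapRange.linearEquiv (fun _ => TensorProduct.directSum K K _ _) ≪≫ₗ
    (DirectSum.sigmaLcurryEquiv K).symm ≪≫ₗ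
    DirectSum.lequivCongr K (CauchyTensor.splitOrderingEquiv k)
      (fun q => CauchyTensor.concatTensorEquiv K V q.2.1 q.2.2) ≪≫ₗ
    DirectSum.prodLequivPi K (Fin (k + 1)) fun σ : Equiv.Perm (Fin k) => ⨂[K] i, V (σ i)⟩
end

section
/- Let K be a field, k and n natural numbers, and V : Fin k → Type a family of K-vector spaces. Then there is a K-linear equivalence between the n-th exterior power of the direct sum and the graded decomposition: ⋀^n_K (Π i : Fin k, V i) ≃ ⨁_{p : {p : Fin k → ℕ // ∑ i, p i = n}} ⨂_{i : Fin k} ⋀^{p i}_K (V i). -/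
/-!
A basis of `Π i, M i` is the disjoint union of bases `κ i` of the `M i`, so an `n`-element
subset of `Σ i, κ i` is the same as a family of `p i`-element subsets of the `κ i` with
`∑ i, p i = n`. The former index the standard basis of `⋀^n (Π i, M i)`, the latter the
basis of `⨁ p, ⨂ i, ⋀^(p i) (M i)` built from the standard bases of the factors.
-/

open scoped TensorProduct DirectSum

namespace Finset

variable {ι : Type*} [Fintype ι] {A : ι → Type*}

noncomputable def piEquivSigma : (Π i, Finset (A i)) ≃ Finset (Σ i, A i) where
  toFun t := univ.sigma t
  invFun s i := s.preimage (Sigma.mk i) sigma_mk_injective.injOn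
  left_inv t := by ext; simp
  right_inv s := by
    classical
    exact sigma_preimage_mk_of_subset s (subset_univ _)

end Finset

namespace Set.powersetCard

variable {ι : Type*} [Fintype ι] {A : ι → Type*}

noncomputable def sigmaEquiv (n : ℕ) :
    powersetCard (Σ i, A i) n ≃
      Σ p : {p : ι → ℕ // ∑ i, p i = n}, Π i, powersetCard (A i) (p.1 i) :=
  calc powersetCard (Σ i, A i) n
      ≃ {t : Π i, Finset (A i) // ∑ i, (t i).card = n} :=
        (Finset.piEquivSigma.subtypeEquiv fun t => by
          simp [Finset.piEquivSigma, Finset.card_sigma]).symm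
    _ ≃ Σ p : {p : ι → ℕ // ∑ i, p i = n},
          {t : Π i, Finset (A i) // (fun i => (t i).card) = p.1} :=
        (Equiv.sigmaSubtypeFiberEquivSubtype (fun (t : Π i, Finset (A i)) i => (t i).card)
          (q := fun p => ∑ i, p i = n) fun _ => Iff.rfl).symm
    _ ≃ Σ p : {p : ι → ℕ // ∑ i, p i = n}, Π i, powersetCard (A i) (p.1 i) :=
        Equiv.sigmaCongrRight fun p => (Equiv.subtypeEquivRight fun _ => by
          simp only [funext_iff, mem_iff]).trans
          (Equiv.subtypePiEquivPi (p := fun i s => s ∈ powersetCard (A i) (p.1 i)))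

end Set.powersetCard

namespace exteriorPower

variable {R : Type*} [CommRing R] {ι : Type*} [Fintype ι] {M : ι → Type*}
  [∀ i, AddCommGroup (M i)] [∀ i, Module R (M i)]

theorem nonempty_pi_linearEquiv_directSum_piTensorProduct [∀ i, Module.Free R (M i)] (n : ℕ) :
    Nonempty ((⋀[R]^n (Π i, M i)) ≃ₗ[R]
      ⨁ p : {p : ι → ℕ // ∑ i, p i = n}, ⨂[R] i, ⋀[R]^(p.1 i) (M i)) := by
  classical
  let b i := Module.Free.chooseBasis R (M i)
  let (i : ι) : LinearOrder (Module.Free.ChooseBasisIndex R (M i)) :=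
    linearOrderOfSTO WellOrderingRel
  let : LinearOrder (Σ i, Module.Free.ChooseBasisIndex R (M i)) :=
    linearOrderOfSTO WellOrderingRel
  exact ⟨((Pi.basis b).exteriorPower n).equiv
    (DFinsupp.basis fun p => Basis.piTensorProduct fun i => (b i).exteriorPower (p.1 i))
    (Set.powersetCard.sigmaEquiv n)⟩

end exteriorPower

/-- The `n`-th exterior power of a finite direct sum of `K`-vector spaces decomposes as
the direct sum, over all `p : Fin k → ℕ` with `∑ i, p i = n`, of the tensor products of
the `p i`-th exterior powers. -/
theorem exteriorPower_directSum_decomposition (K : Type*) [Field K] (k n : ℕ)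
    (V : Fin k → Type*) [∀ i, AddCommGroup (V i)] [∀ i, Module K (V i)] :
    Nonempty
      ((⋀[K]^n (Π i : Fin k, V i)) ≃ₗ[K]
        ⨁ p : {p : Fin k → ℕ // ∑ i, p i = n},
          ⨂[K] i : Fin k, ⋀[K]^(p.1 i) (V i)) :=
  exteriorPower.nonempty_pi_linearEquiv_directSum_piTensorProduct n
end

section
/- Let K be a field, k and d natural numbers, and V : Fin k → Type a family of finite-dimensional K-vector spaces with finrank K (V i) = d for every i. Then there is a K-linear equivalence between the top exterior power of the direct sum and the tensor product of the top exterior powers: ⋀^(k·d)_K (Π i : Fin k, V i) ≃ ⨂_{i : Fin k} ⋀^d_K (V i). -/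
open scoped TensorProduct

set_option maxHeartbeats 1600000 in
open ExteriorAlgebra Module in
/-- The top exterior power of a finite-dimensional vector space is one-dimensional. -/
noncomputable def topExteriorPowerEquiv (K W : Type*) [Field K] [AddCommGroup W]
    [Module K W] [FiniteDimensional K W] {n : ℕ} (h : Module.finrank K W = n) :
    (⋀[K]^n W) ≃ₗ[K] K := by
  classical
  let b : Basis (Fin n) K W := Module.finBasisOfFinrankEq K W h
  set x : ExteriorAlgebra K W := ιMulti K n ⇑b with hx
  -- `x` spans the top exterior power
  have hspan : (⋀[K]^n W) = Submodule.span K {x} := by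
    refine le_antisymm ?_ ?_
    · rw [← ιMulti_span_fixedDegree, Submodule.span_le]
      rintro _ ⟨v, rfl⟩
      have hv : (ιMulti K n v : ExteriorAlgebra K W)
          = (ιMulti K n) (fun i => ∑ j : Fin n, b.repr (v i) j • b j) := by
        congr 1; funext i; rw [b.sum_repr (v i)]
      rw [hv]
      rw [show ((ιMulti K n) (fun i => ∑ j : Fin n, b.repr (v i) j • b j)
            : ExteriorAlgebra K W)
          = ∑ r : Fin n → Fin n, (ιMulti K n) (fun i => b.repr (v i) (r i) • b (r i)) from
        (ιMulti K n).toMultilinearMap.map_sum (fun i j => b.repr (v i) j • b j)]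
      refine Submodule.sum_mem _ fun r _ => ?_
      rw [show ((ιMulti K n) (fun i => b.repr (v i) (r i) • b (r i)) : ExteriorAlgebra K W)
          = (∏ i, b.repr (v i) (r i)) • (ιMulti K n) (fun i => b (r i)) from
        (ιMulti K n).toMultilinearMap.map_smul_univ _ _]
      refine Submodule.smul_mem _ _ ?_
      by_cases hr : Function.Injective r
      · have hbij : Function.Bijective r := (Finite.injective_iff_bijective).mp hr
        let σ : Equiv.Perm (Fin n) := Equiv.ofBijective r hbij
        have h1 : ((ιMulti K n) (fun i => b (r i)) : ExteriorAlgebra K W)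
            = Equiv.Perm.sign σ • (ιMulti K n) ⇑b := (ιMulti K n).map_perm ⇑b σ
        rw [h1, Units.smul_def]
        exact (Submodule.span K {x}).toAddSubgroup.zsmul_mem (Submodule.subset_span rfl) _
      · rw [AlternatingMap.map_eq_zero_of_not_injective _ _
          (fun hinj => hr (fun a a' haa' => hinj (congrArg b haa')))]
        exact Submodule.zero_mem _
    · rw [Submodule.span_le, Set.singleton_subset_iff]
      exact ιMulti_range K n ⟨⇑b, rfl⟩
  -- `x` is nonzero
  have hx0 : x ≠ 0 := by
    intro h0
    have := congrArg (liftAlternating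
      (Function.update (fun i => (0 : W [⋀^Fin i]→ₗ[K] K)) n b.det)) h0
    rw [hx, liftAlternating_apply_ιMulti, Function.update_self, Basis.det_self, map_zero] at this
    exact one_ne_zero this
  exact (LinearEquiv.ofEq _ _ hspan).trans
    (LinearEquiv.toSpanNonzeroSingleton K _ x hx0).symm

/-- For a family `V : Fin k → Type` of `d`-dimensional `K`-vector spaces, the top
(`k·d`-th) exterior power of the direct sum is the tensor product of the top (`d`-th)
exterior powers of the factors. -/
theorem top_exteriorPower_pi_equiv_tensor (K : Type*) [Field K] (k d : ℕ)
    (V : Fin k → Type*) [∀ i, AddCommGroup (V i)] [∀ i, Module K (V i)]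
    [∀ i, FiniteDimensional K (V i)] (hd : ∀ i, Module.finrank K (V i) = d) :
    Nonempty
      ((⋀[K]^(k * d) (Π i : Fin k, V i)) ≃ₗ[K] ⨂[K] i : Fin k, ⋀[K]^d (V i)) := by
  have hW : Module.finrank K (Π i : Fin k, V i) = k * d := by
    rw [Module.finrank_pi_fintype]
    simp [hd, Finset.sum_const, Fintype.card_fin]
  exact ⟨(topExteriorPowerEquiv K _ hW).trans
    ((PiTensorProduct.constantBaseRingEquiv (Fin k) K).toLinearEquiv.symm.trans
      (PiTensorProduct.congr fun i => topExteriorPowerEquiv K (V i) (hd i)).symm)⟩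
end

section
/- Let K be a commutative ring, σ a type, and κ : σ → σ → K a kernel satisfying κ i j = -κ j i and κ i i = 0 for all i, j. Then there exists a unique K-bilinear map B : MvPolynomial σ K → MvPolynomial σ K → MvPolynomial σ K such that: (i) B f g = - B g f for all f, g (antisymmetry); (ii) B f (g·h) = (B f g)·h + g·(B f h) for all f, g, h (Leibniz rule); and (iii) B (X i) (X j) = C (κ i j) for all i, j (values on generators). Moreover, this unique B satisfies the Jacobi identity B f (B g h) + B g (B h f) + B h (B f g) = 0 for all f, g, h, so that (MvPolynomial σ K, B) is a Poisson algebra. -/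
open MvPolynomial

section Aux

variable {K : Type*} [CommRing K] {σ : Type*}

local notation "P" => MvPolynomial σ K

/-- The inner derivation determined by row `i` of the kernel. -/
noncomputable def pbInner (κ : σ → σ → K) (i : σ) : Derivation K P P :=
  mkDerivation K (fun j => C (κ i j))

/-- The double derivation. -/
noncomputable def pbOuter (κ : σ → σ → K) : Derivation K P (Derivation K P P) :=
  mkDerivation K (fun i => pbInner κ i)

/-- The bracket as a bilinear map. -/
noncomputable def pbBracket (κ : σ → σ → K) : P →ₗ[K] P →ₗ[K] P where
  toFun f := (pbOuter κ f).toLinearMap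
  map_add' f g := by simp only [map_add]; rfl
  map_smul' a f := by simp only [Derivation.map_smul, Derivation.coe_smul_linearMap, RingHom.id_apply]

lemma pbBracket_apply (κ : σ → σ → K) (f g : P) :
    pbBracket κ f g = pbOuter κ f g := rfl

lemma pbBracket_X_X (κ : σ → σ → K) (i j : σ) :
    pbBracket κ (X i) (X j) = C (κ i j) := by
  simp [pbBracket_apply, pbOuter, pbInner, mkDerivation_X]

lemma pbBracket_leibniz₂ (κ : σ → σ → K) (f g h : P) :
    pbBracket κ f (g * h) = pbBracket κ f g * h + g * pbBracket κ f h := by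
  simp only [pbBracket_apply, Derivation.leibniz, smul_eq_mul]
  ring

lemma pbBracket_leibniz₁ (κ : σ → σ → K) (f g h : P) :
    pbBracket κ (f * g) h = pbBracket κ f h * g + f * pbBracket κ g h := by
  simp only [pbBracket_apply, Derivation.leibniz, Derivation.add_apply,
    Derivation.smul_apply, smul_eq_mul]
  ring

lemma pbBracket_C₁ (κ : σ → σ → K) (a : K) (g : P) :
    pbBracket κ (C a) g = 0 := by
  rw [pbBracket_apply, show (C a : P) = algebraMap K P a from rfl,
    Derivation.map_algebraMap]
  rfl

lemma pbBracket_C₂ (κ : σ → σ → K) (a : K) (f : P) :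
    pbBracket κ f (C a) = 0 := by
  rw [pbBracket_apply, show (C a : P) = algebraMap K P a from rfl,
    Derivation.map_algebraMap]

lemma pbBracket_antisymm (κ : σ → σ → K)
    (hanti : ∀ i j, κ i j = -κ j i) (f g : P) :
    pbBracket κ f g = -pbBracket κ g f := by
  have key : ∀ (i : σ) (g : P), pbBracket κ (X i) g = -pbBracket κ g (X i) := by
    intro i g
    induction g using MvPolynomial.induction_on with
    | C a => rw [pbBracket_C₂, pbBracket_C₁, neg_zero]
    | add p q hp hq => simp only [map_add, LinearMap.add_apply, hp, hq]; ring
    | mul_X p j hp =>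
        rw [pbBracket_leibniz₂, pbBracket_leibniz₁, pbBracket_X_X, pbBracket_X_X,
          hp, hanti j i, map_neg]
        ring
  induction f using MvPolynomial.induction_on with
  | C a => rw [pbBracket_C₁, pbBracket_C₂, neg_zero]
  | add p q hp hq => simp only [map_add, LinearMap.add_apply, hp, hq]; ring
  | mul_X p i hp =>
      rw [pbBracket_leibniz₁, pbBracket_leibniz₂, hp, key i g]
      ring

/-- Jacobi identity for any bracket satisfying the three properties. -/
lemma pb_jacobi (B : P →ₗ[K] P →ₗ[K] P)
    (ha : ∀ f g, B f g = -B g f)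
    (hl : ∀ f g h, B f (g * h) = B f g * h + g * B f h)
    (κ : σ → σ → K) (hx : ∀ i j, B (X i) (X j) = C (κ i j)) :
    ∀ f g h, B f (B g h) + B g (B h f) + B h (B f g) = 0 := by
  have h1 : ∀ f : P, B f 1 = 0 := by
    intro f
    have h := hl f 1 1
    rw [mul_one, mul_one, one_mul] at h
    exact (add_eq_left.mp h.symm)
  have hC2 : ∀ (f : P) (a : K), B f (C a) = 0 := by
    intro f a
    rw [C_eq_smul_one, map_smul, h1, smul_zero]
  have hC1 : ∀ (a : K) (g : P), B (C a) g = 0 := by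
    intro a g
    rw [show B (C a) g = -B g (C a) from ha _ _, hC2, neg_zero]
  have hl1 : ∀ f g h : P, B (f * g) h = B f h * g + f * B g h := by
    intro f g h
    rw [show B (f * g) h = -B h (f * g) from ha _ _, hl h f g,
      show B f h = -B h f from ha _ _, show B g h = -B h g from ha _ _]
    ring
  have hmul : ∀ f g a b : P,
      B f (B g (a * b)) + B g (B (a * b) f) + B (a * b) (B f g)
        = a * (B f (B g b) + B g (B b f) + B b (B f g))
          + b * (B f (B g a) + B g (B a f) + B a (B f g)) := by
    intro f g a b
    simp only [hl, hl1, map_add]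
    linear_combination (B g a) * ha b f + (B g b) * ha a f
  have L3 : ∀ i j k : σ,
      B (X i) (B (X j) (X k)) + B (X j) (B (X k) (X i)) + B (X k) (B (X i) (X j)) = 0 := by
    intro i j k
    simp [hx, hC2]
  have L2 : ∀ (i j : σ) (h : P),
      B (X i) (B (X j) h) + B (X j) (B h (X i)) + B h (B (X i) (X j)) = 0 := by
    intro i j h
    induction h using MvPolynomial.induction_on with
    | C a => simp [hC1, hC2]
    | add p q hp hq =>
        simp only [map_add, LinearMap.add_apply]
        linear_combination hp + hq
    | mul_X p k hp =>
        linear_combination hmul (X i) (X j) p (X k) + p * L3 i j k + X k * hp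
  have L1 : ∀ (i : σ) (g h : P),
      B (X i) (B g h) + B g (B h (X i)) + B h (B (X i) g) = 0 := by
    intro i g h
    induction g using MvPolynomial.induction_on with
    | C a => simp [hC1, hC2]
    | add p q hp hq =>
        simp only [map_add, LinearMap.add_apply]
        linear_combination hp + hq
    | mul_X p j hp =>
        linear_combination hmul h (X i) p (X j) + p * L2 i j h + X j * hp
  intro f g h
  induction f using MvPolynomial.induction_on with
  | C a => simp [hC1, hC2]
  | add p q hp hq =>
      simp only [map_add, LinearMap.add_apply]
      linear_combination hp + hq
  | mul_X p i hp =>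
      linear_combination hmul g h p (X i) + p * L1 i g h + X i * hp

/-- Uniqueness: any bracket with the three properties equals `pbBracket κ`. -/
lemma pb_unique (κ : σ → σ → K) (B : P →ₗ[K] P →ₗ[K] P)
    (ha : ∀ f g, B f g = -B g f)
    (hl : ∀ f g h, B f (g * h) = B f g * h + g * B f h)
    (hx : ∀ i j, B (X i) (X j) = C (κ i j)) :
    ∀ f g, B f g = pbBracket κ f g := by
  have h1 : ∀ f : P, B f 1 = 0 := by
    intro f
    have h := hl f 1 1
    rw [mul_one, mul_one, one_mul] at h
    exact (add_eq_left.mp h.symm)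
  have hC2 : ∀ (f : P) (a : K), B f (C a) = 0 := by
    intro f a
    rw [C_eq_smul_one, map_smul, h1, smul_zero]
  have hC1 : ∀ (a : K) (g : P), B (C a) g = 0 := by
    intro a g
    rw [show B (C a) g = -B g (C a) from ha _ _, hC2, neg_zero]
  have hl1 : ∀ f g h : P, B (f * g) h = B f h * g + f * B g h := by
    intro f g h
    rw [show B (f * g) h = -B h (f * g) from ha _ _, hl h f g,
      show B f h = -B h f from ha _ _, show B g h = -B h g from ha _ _]
    ring
  have key : ∀ (i : σ) (g : P), B (X i) g = pbBracket κ (X i) g := by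
    intro i g
    induction g using MvPolynomial.induction_on with
    | C a => rw [hC2, pbBracket_C₂]
    | add p q hp hq => simp only [map_add, hp, hq]
    | mul_X p j hp => rw [hl, pbBracket_leibniz₂, hx, pbBracket_X_X, hp]
  intro f g
  induction f using MvPolynomial.induction_on with
  | C a => rw [hC1, pbBracket_C₁]
  | add p q hp hq => simp only [map_add, LinearMap.add_apply, hp, hq]
  | mul_X p i hp => rw [hl1, pbBracket_leibniz₁, hp, key i g]

end Aux

/-- An antisymmetric kernel `κ` on the variables determines a unique `K`-bilinear
bracket on `MvPolynomial σ K` which is antisymmetric, satisfies the Leibniz rule, and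
takes the value `C (κ i j)` on the generators `X i`, `X j`; moreover this unique
bracket satisfies the Jacobi identity, so it is a Poisson bracket. -/
theorem mvPolynomial_poisson_bracket_from_kernel (K : Type*) [CommRing K] (σ : Type*)
    (κ : σ → σ → K) (hanti : ∀ i j, κ i j = -κ j i) (hdiag : ∀ i, κ i i = 0) :
    (∃! B : MvPolynomial σ K →ₗ[K] MvPolynomial σ K →ₗ[K] MvPolynomial σ K,
        (∀ f g, B f g = -B g f) ∧
        (∀ f g h, B f (g * h) = B f g * h + g * B f h) ∧
        (∀ i j, B (X i) (X j) = C (κ i j))) ∧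
      (∀ B : MvPolynomial σ K →ₗ[K] MvPolynomial σ K →ₗ[K] MvPolynomial σ K,
        ((∀ f g, B f g = -B g f) ∧
          (∀ f g h, B f (g * h) = B f g * h + g * B f h) ∧
          (∀ i j, B (X i) (X j) = C (κ i j))) →
        ∀ f g h, B f (B g h) + B g (B h f) + B h (B f g) = 0) := by
  constructor
  · refine ⟨pbBracket κ,
      ⟨pbBracket_antisymm κ hanti, pbBracket_leibniz₂ κ, pbBracket_X_X κ⟩, ?_⟩
    rintro B ⟨hB1, hB2, hB3⟩
    apply LinearMap.ext; intro f; apply LinearMap.ext; intro g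
    exact pb_unique κ B hB1 hB2 hB3 f g
  · rintro B ⟨hB1, hB2, hB3⟩
    exact pb_jacobi B hB1 hB2 κ hB3
end

section
/- Let X be a type with decidable equality, A a commutative ring, and B : A → A → A a map which is additive in each argument and satisfies antisymmetry (B a b = -B b a), the Jacobi identity (B a (B b c) + B b (B c a) + B c (B a b) = 0), and the Leibniz rule (B a (b·c) = B a b · c + b · B a c). Define on functions Finset X → A the bracket {f, g}(S) = Σ_{T ⊆ S} B (f T) (g (S \ T)). Then {·,·} is additive in each argument and satisfies antisymmetry ({f,g} = -{g,f}), the Jacobi identity ({f,{g,h}} + {g,{h,f}} + {h,{f,g}} = 0), and the Leibniz rule with respect to the subset-convolution product ({f, g ⋆ h} = {f,g} ⋆ h + g ⋆ {f,h}). -/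
open Finset

section Aux

variable {X : Type*} [DecidableEq X] {A : Type*} [CommRing A]

private lemma swapSum (S : Finset X) (F : Finset X → Finset X → A) :
    ∑ T ∈ S.powerset, ∑ U ∈ (S \ T).powerset, F T U
      = ∑ U ∈ S.powerset, ∑ T ∈ (S \ U).powerset, F T U := by
  refine Finset.sum_comm' ?_
  intro T U
  simp only [mem_powerset, Finset.subset_sdiff]
  constructor
  · rintro ⟨h1, h2, h3⟩
    exact ⟨⟨h1, h3.symm⟩, h2⟩
  · rintro ⟨⟨h1, h3⟩, h2⟩
    exact ⟨h1, h2, h3.symm⟩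

private lemma cycSum (S : Finset X) (G : Finset X → Finset X → Finset X → A) :
    ∑ T ∈ S.powerset, ∑ U ∈ (S \ T).powerset, G T U ((S \ T) \ U)
      = ∑ T ∈ S.powerset, ∑ U ∈ (S \ T).powerset, G U ((S \ T) \ U) T := by
  rw [Finset.sum_sigma', Finset.sum_sigma']
  refine Finset.sum_nbij' (fun p => ⟨(S \ p.1) \ p.2, p.1⟩)
    (fun p => ⟨p.2, (S \ p.1) \ p.2⟩) ?_ ?_ ?_ ?_ ?_ <;>
  · rintro ⟨T, U⟩ hp
    simp only [Finset.mem_sigma, Finset.mem_powerset] at *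
    obtain ⟨hT, hU⟩ := hp
    have key1 : (S \ ((S \ T) \ U)) \ T = U := by
      ext x
      have hx1 : x ∈ T → x ∈ S := @hT x
      have hx2 : x ∈ U → x ∈ S ∧ x ∉ T := fun hh => Finset.mem_sdiff.mp (hU hh)
      simp only [Finset.mem_sdiff]
      tauto
    have key2 : (S \ U) \ ((S \ T) \ U) = T := by
      ext x
      have hx1 : x ∈ T → x ∈ S := @hT x
      have hx2 : x ∈ U → x ∈ S ∧ x ∉ T := fun hh => Finset.mem_sdiff.mp (hU hh)
      simp only [Finset.mem_sdiff]
      tauto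
    first
    | exact ⟨Finset.Subset.trans Finset.sdiff_subset Finset.sdiff_subset, fun x hx => by
        have hx1 : x ∈ T → x ∈ S := @hT x
        have hx2 : x ∈ ((S \ T) \ U) → (x ∈ S ∧ x ∉ T) ∧ x ∉ U := fun hh => by
          simpa [Finset.mem_sdiff] using hh
        simp only [Finset.mem_sdiff]; tauto⟩
    | exact ⟨Finset.Subset.trans hU Finset.sdiff_subset, fun x hx => by
        have hx2 : (x ∈ S ∧ x ∉ T) ∧ x ∉ U := by simpa [Finset.mem_sdiff] using hx
        have hx3 : x ∈ U → x ∈ S ∧ x ∉ T := fun hh => Finset.mem_sdiff.mp (hU hh)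
        simp only [Finset.mem_sdiff]; tauto⟩
    | simp [key1, key2]

private lemma splitSum (S : Finset X) (F : Finset X → Finset X → Finset X → A) :
    ∑ W ∈ S.powerset, ∑ T ∈ W.powerset, F T (W \ T) (S \ W)
      = ∑ T ∈ S.powerset, ∑ U ∈ (S \ T).powerset, F T U ((S \ T) \ U) := by
  rw [Finset.sum_sigma', Finset.sum_sigma']
  refine Finset.sum_nbij' (fun p => ⟨p.2, p.1 \ p.2⟩) (fun p => ⟨p.1 ∪ p.2, p.1⟩)
    ?_ ?_ ?_ ?_ ?_
  · rintro ⟨W, T⟩ hp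
    simp only [Finset.mem_sigma, mem_powerset] at *
    obtain ⟨hW, hT⟩ := hp
    exact ⟨hT.trans hW, fun x hx => by
      simp only [Finset.mem_sdiff] at hx ⊢
      exact ⟨hW hx.1, hx.2⟩⟩
  · rintro ⟨T, U⟩ hp
    simp only [Finset.mem_sigma, mem_powerset] at *
    obtain ⟨hT, hU⟩ := hp
    exact ⟨Finset.union_subset hT (hU.trans sdiff_subset), Finset.subset_union_left⟩
  · rintro ⟨W, T⟩ hp
    simp only [Finset.mem_sigma, mem_powerset] at hp
    simp [Finset.union_sdiff_of_subset hp.2]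
  · rintro ⟨T, U⟩ hp
    simp only [Finset.mem_sigma, mem_powerset] at hp
    have : Disjoint T U := (Finset.subset_sdiff.mp hp.2).2.symm
    simp [Finset.union_sdiff_cancel_left this]
  · rintro ⟨W, T⟩ hp
    simp only [Finset.mem_sigma, mem_powerset] at hp
    obtain ⟨hW, hT⟩ := hp
    have key : (S \ T) \ (W \ T) = S \ W := by
      ext x
      simp only [Finset.mem_sdiff]
      constructor
      · rintro ⟨⟨hxS, hxT⟩, hx⟩
        exact ⟨hxS, fun h => hx ⟨h, hxT⟩⟩
      · rintro ⟨hxS, hxW⟩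
        exact ⟨⟨hxS, fun h => hxW (hT h)⟩, fun h => hxW h.1⟩
    simp [key]

end Aux

/-- The subset-convolution product on functions `Finset X → A`:
`(f ⋆ g)(S) = ∑_{T ⊆ S} f T * g (S \ T)`. -/
def subsetConv {X : Type*} [DecidableEq X] {A : Type*} [CommRing A]
    (f g : Finset X → A) : Finset X → A :=
  fun S => ∑ T ∈ S.powerset, f T * g (S \ T)

/-- The subset-convolution bracket on functions `Finset X → A` induced by a bracket `B`
on `A`: `{f, g}(S) = ∑_{T ⊆ S} B (f T) (g (S \ T))`. -/
def subsetBracket {X : Type*} [DecidableEq X] {A : Type*} [CommRing A]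
    (B : A → A → A) (f g : Finset X → A) : Finset X → A :=
  fun S => ∑ T ∈ S.powerset, B (f T) (g (S \ T))

/-- If `B : A → A → A` is biadditive, antisymmetric, satisfies the Jacobi identity and
the Leibniz rule, then the induced subset-convolution bracket on `Finset X → A` is
biadditive, antisymmetric, satisfies the Jacobi identity, and the Leibniz rule with
respect to the subset-convolution product. -/
theorem subsetBracket_poisson (X : Type*) [DecidableEq X] (A : Type*) [CommRing A]
    (B : A → A → A)
    (haddl : ∀ a b c : A, B (a + b) c = B a c + B b c)
    (haddr : ∀ a b c : A, B a (b + c) = B a b + B a c)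
    (hanti : ∀ a b : A, B a b = -B b a)
    (hjac : ∀ a b c : A, B a (B b c) + B b (B c a) + B c (B a b) = 0)
    (hleib : ∀ a b c : A, B a (b * c) = B a b * c + b * B a c) :
    (∀ f g h : Finset X → A,
        subsetBracket B (f + g) h = subsetBracket B f h + subsetBracket B g h) ∧
      (∀ f g h : Finset X → A,
        subsetBracket B f (g + h) = subsetBracket B f g + subsetBracket B f h) ∧
      (∀ f g : Finset X → A, subsetBracket B f g = -subsetBracket B g f) ∧
      (∀ f g h : Finset X → A,
        subsetBracket B f (subsetBracket B g h) + subsetBracket B g (subsetBracket B h f)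
          + subsetBracket B h (subsetBracket B f g) = 0) ∧
      (∀ f g h : Finset X → A,
        subsetBracket B f (subsetConv g h) =
          subsetConv (subsetBracket B f g) h + subsetConv g (subsetBracket B f h)) := by
  -- B applied to a sum on the right
  have hBsum : ∀ (a : A) (s : Finset (Finset X)) (f : Finset X → A),
      B a (∑ i ∈ s, f i) = ∑ i ∈ s, B a (f i) := by
    intro a s f
    exact map_sum (AddMonoidHom.mk' (B a) (fun b c => haddr a b c)) f s
  refine ⟨?_, ?_, ?_, ?_, ?_⟩
  · intro f g h
    funext S
    simp [subsetBracket, haddl, Finset.sum_add_distrib]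
  · intro f g h
    funext S
    simp [subsetBracket, haddr, Finset.sum_add_distrib]
  · intro f g
    funext S
    simp only [subsetBracket, Pi.neg_apply, ← Finset.sum_neg_distrib]
    refine Finset.sum_nbij' (fun T => S \ T) (fun T => S \ T) ?_ ?_ ?_ ?_ ?_
    · intro T hT; simp
    · intro T hT; simp
    · intro T hT
      exact Finset.sdiff_sdiff_eq_self (Finset.mem_powerset.mp hT)
    · intro T hT
      exact Finset.sdiff_sdiff_eq_self (Finset.mem_powerset.mp hT)
    · intro T hT
      rw [hanti, Finset.sdiff_sdiff_eq_self (Finset.mem_powerset.mp hT)]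
  · intro f g h
    funext S
    simp only [Pi.add_apply, Pi.zero_apply, subsetBracket, hBsum]
    rw [cycSum S (fun T U V => B (g T) (B (h U) (f V))),
      cycSum S (fun T U V => B (h T) (B (f U) (g V))),
      cycSum S (fun T U V => B (h U) (B (f V) (g T)))]
    simp only [← Finset.sum_add_distrib]
    refine Finset.sum_eq_zero fun T hT => Finset.sum_eq_zero fun U hU => ?_
    exact hjac (f T) (g U) (h ((S \ T) \ U))
  · intro f g h
    funext S
    simp only [Pi.add_apply, subsetBracket, subsetConv, hBsum, hleib,
      Finset.sum_add_distrib, Finset.sum_mul, Finset.mul_sum]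
    congr 1
    · rw [splitSum S (fun T U V => B (f T) (g U) * h V)]
    · rw [swapSum S (fun W T => g W * B (f T) (h ((S \ W) \ T)))]
      refine Finset.sum_congr rfl fun T hT => Finset.sum_congr rfl fun U hU => ?_
      rw [sdiff_right_comm]
end
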